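/- Given a real number a, reals 0 < μ ≤ n with n a positive integer, an i.i.d. sequence (W_i)_{i≥1} of square-integrable real random variables, and a random variable M, independent of the sequence (W_i), having the binomial distribution with n trials and success probability μ/n, define the multifidelity correction estimator S = a + μ^{−1} Σ_{i=1}^{M} (W_i − a). Then E[S²] = (E[W_1])² + E[(W_1 − a)²]/μ − (E[W_1] − a)²/n. -/

import Mathlib

/-!
Conditionally on `M = m`, the estimator is an affine function of a sum of `m` i.i.d. variables,
so its conditional second moment is `μ⁻² m Var[W₀] + (a₀ + μ⁻¹ m (E[W₀] - a₀))²`, a quadratic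
polynomial in `m`. By independence of `M` and `(Wᵢ)`, `E[S²]` is the average of this polynomial
under the binomial law, which only involves `E[M] = μ` and `E[M²] = μ + μ² (1 - 1/n)`; the
correction `-μ²/n` in the second moment is the source of the `-(E[W₀] - a₀)²/n` term.
-/

open MeasureTheory ProbabilityTheory Finset

noncomputable def binomialWeight (n : ℕ) (p : ℝ) (k : ℕ) : ℝ :=
  n.choose k * p ^ k * (1 - p) ^ (n - k)

namespace binomialWeight

variable (n : ℕ) (p : ℝ)

lemma nonneg (hp₀ : 0 ≤ p) (hp₁ : p ≤ 1) (k : ℕ) : 0 ≤ binomialWeight n p k := by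
  have : 0 ≤ 1 - p := sub_nonneg.2 hp₁
  unfold binomialWeight
  positivity

lemma sum_eq_one : ∑ k ∈ range (n + 1), binomialWeight n p k = 1 := by
  calc ∑ k ∈ range (n + 1), binomialWeight n p k = (p + (1 - p)) ^ n := by
        rw [add_pow]
        exact sum_congr rfl fun k _ => by unfold binomialWeight; ring
    _ = 1 := by simp

lemma succ_mul_succ_eq (k : ℕ) :
    (k + 1 : ℝ) * binomialWeight (n + 1) p (k + 1) = (n + 1) * p * binomialWeight n p k := by
  have h : ((n + 1 : ℕ) : ℝ) * n.choose k = (n + 1).choose (k + 1) * ((k + 1 : ℕ) : ℝ) := by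
    exact_mod_cast Nat.add_one_mul_choose_eq n k
  push_cast at h
  simp only [binomialWeight, Nat.add_sub_add_right]
  linear_combination (-(p ^ (k + 1)) * (1 - p) ^ (n - k)) * h

lemma sum_natCast_mul_mul_succ (f : ℕ → ℝ) :
    ∑ k ∈ range (n + 2), k * f k * binomialWeight (n + 1) p k
      = (n + 1) * p * ∑ k ∈ range (n + 1), f (k + 1) * binomialWeight n p k := by
  rw [sum_range_succ', mul_sum]
  simp only [Nat.cast_zero, zero_mul, add_zero]
  refine sum_congr rfl fun k _ => ?_
  push_cast
  linear_combination f (k + 1) * succ_mul_succ_eq n p k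

lemma sum_natCast_mul : ∑ k ∈ range (n + 1), k * binomialWeight n p k = n * p := by
  cases n with
  | zero => simp
  | succ n => simpa [sum_eq_one] using sum_natCast_mul_mul_succ n p 1

lemma sum_natCast_sq_mul :
    ∑ k ∈ range (n + 1), (k : ℝ) ^ 2 * binomialWeight n p k = n * p + n * (n - 1) * p ^ 2 := by
  cases n with
  | zero => simp
  | succ n =>
    have h := sum_natCast_mul_mul_succ n p fun k => k
    simp only [Nat.cast_add_one, add_mul, one_mul, sum_add_distrib, sum_natCast_mul,
      sum_eq_one] at h
    simp only [sq, h]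
    push_cast
    ring

lemma sum_mul_quadratic (α β γ : ℝ) :
    ∑ k ∈ range (n + 1), binomialWeight n p k * (α + β * k + γ * k ^ 2)
      = α + β * (n * p) + γ * (n * p + n * (n - 1) * p ^ 2) := by
  calc ∑ k ∈ range (n + 1), binomialWeight n p k * (α + β * k + γ * k ^ 2)
      = α * ∑ k ∈ range (n + 1), binomialWeight n p k
        + β * ∑ k ∈ range (n + 1), k * binomialWeight n p k
        + γ * ∑ k ∈ range (n + 1), (k : ℝ) ^ 2 * binomialWeight n p k := by
        simp only [mul_sum, ← sum_add_distrib]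
        exact sum_congr rfl fun k _ => by ring
    _ = _ := by rw [sum_eq_one, sum_natCast_mul, sum_natCast_sq_mul, mul_one]

end binomialWeight

section

variable {Ω : Type*} [MeasurableSpace Ω] {P : Measure Ω}

lemma integral_const_add_mul_sq [IsProbabilityMeasure P] {Y : Ω → ℝ} (hY : MemLp Y 2 P)
    (a c : ℝ) :
    ∫ ω, (a + c * Y ω) ^ 2 ∂P = c ^ 2 * Var[Y; P] + (a + c * ∫ ω, Y ω ∂P) ^ 2 := by
  have hZ : MemLp (fun ω => a + c * Y ω) 2 P := (memLp_const a).add (hY.const_mul c)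
  have hvar := variance_eq_sub hZ
  rw [variance_const_add (hY.const_mul c).aestronglyMeasurable, variance_const_mul,
    integral_add (integrable_const a) ((hY.integrable one_le_two).const_mul c),
    integral_const, integral_const_mul] at hvar
  simp only [Pi.pow_apply, probReal_univ, one_smul] at hvar
  linear_combination -hvar

lemma integral_const_add_mul_sum_sq [IsProbabilityMeasure P] {ι : Type*} {X : ι → Ω → ℝ}
    {s : Finset ι} (hX : ∀ i ∈ s, MemLp (X i) 2 P)
    (hindep : Set.Pairwise ↑s fun i j => X i ⟂ᵢ[P] X j) (a c : ℝ) :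
    ∫ ω, (a + c * ∑ i ∈ s, X i ω) ^ 2 ∂P
      = c ^ 2 * ∑ i ∈ s, Var[X i; P] + (a + c * ∑ i ∈ s, ∫ ω, X i ω ∂P) ^ 2 := by
  have h := integral_const_add_mul_sq (memLp_finsetSum' s hX) a c
  rw [IndepFun.variance_sum hX hindep] at h
  simp only [Finset.sum_apply] at h
  rw [h, integral_finsetSum s fun i hi => (hX i hi).integrable one_le_two]

lemma integral_const_add_mul_sum_range_sq_of_identDistrib [IsProbabilityMeasure P]
    {X : ℕ → Ω → ℝ} (hX : ∀ i, MemLp (X i) 2 P) (hindep : Pairwise fun i j => X i ⟂ᵢ[P] X j)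
    (hident : ∀ i, IdentDistrib (X i) (X 0) P P) (a c : ℝ) (m : ℕ) :
    ∫ ω, (a + c * ∑ i ∈ range m, X i ω) ^ 2 ∂P
      = c ^ 2 * (m * Var[X 0; P]) + (a + c * (m * ∫ ω, X 0 ω ∂P)) ^ 2 := by
  rw [integral_const_add_mul_sum_sq (fun i _ => hX i) (fun i _ j _ hij => hindep hij)]
  simp only [fun i => (hident i).variance_eq, fun i => (hident i).integral_eq, sum_const,
    card_range, nsmul_eq_mul]

variable {κ : Type*} [MeasurableSpace κ] [MeasurableSingletonClass κ]

lemma ae_mem_of_sum_measure_preimage_singleton_eq_one [IsProbabilityMeasure P] {N : Ω → κ}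
    (hN : Measurable N) {s : Finset κ} (h : ∑ k ∈ s, P (N ⁻¹' {k}) = 1) :
    ∀ᵐ ω ∂P, N ω ∈ s := by
  rw [sum_measure_preimage_singleton s fun k _ => hN (measurableSet_singleton k)] at h
  exact (ae_mem_iff_measure_eq (hN s.measurableSet).nullMeasurableSet).2 (by simpa using h)

lemma integral_comp_eq_sum_measureReal_of_indepFun {β : Type*} [MeasurableSpace β]
    {N : Ω → κ} {Y : Ω → β} (hN : Measurable N) (hNY : N ⟂ᵢ[P] Y) {s : Finset κ}
    (hs : ∀ᵐ ω ∂P, N ω ∈ s) {F : κ → β → ℝ} (hF : ∀ k ∈ s, Measurable (F k))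
    (hFY : ∀ k ∈ s, Integrable (fun ω => F k (Y ω)) P) :
    ∫ ω, F (N ω) (Y ω) ∂P = ∑ k ∈ s, P.real (N ⁻¹' {k}) * ∫ ω, F k (Y ω) ∂P := by
  have hsplit : (fun ω => F (N ω) (Y ω))
      =ᵐ[P] fun ω => ∑ k ∈ s, ({k} : Set κ).indicator 1 (N ω) * F k (Y ω) := by
    filter_upwards [hs] with ω hω
    rw [sum_eq_single_of_mem (N ω) hω fun k _ hk => by simp [Ne.symm hk]]
    simp
  have hindicator (k : κ) :
      ∫ ω, ({k} : Set κ).indicator (1 : κ → ℝ) (N ω) ∂P = P.real (N ⁻¹' {k}) :=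
    integral_indicator_one (hN (measurableSet_singleton k))
  have hmeas (k : κ) : Measurable (({k} : Set κ).indicator (1 : κ → ℝ)) :=
    measurable_one.indicator (measurableSet_singleton k)
  rw [integral_congr_ae hsplit, integral_finsetSum]
  · refine sum_congr rfl fun k hk => ?_
    rw [← hindicator k]
    exact (hNY.comp (hmeas k) (hF k hk)).integral_fun_mul_eq_mul_integral
      ((hmeas k).comp hN).aestronglyMeasurable (hFY k hk).aestronglyMeasurable
  · refine fun k hk => ((hFY k hk).indicator (hN (measurableSet_singleton k))).congr ?_
    refine .of_forall fun ω => ?_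
    by_cases h : N ω = k <;> simp [h]

lemma integral_comp_eq_sum_binomialWeight_of_indepFun [IsProbabilityMeasure P] {β : Type*}
    [MeasurableSpace β] {n : ℕ} {p : ℝ} (hp₀ : 0 ≤ p) (hp₁ : p ≤ 1) {N : Ω → ℕ} {Y : Ω → β}
    (hN : Measurable N) (hNdist : ∀ k, P (N ⁻¹' {k}) = ENNReal.ofReal (binomialWeight n p k))
    (hNY : N ⟂ᵢ[P] Y) {F : ℕ → β → ℝ} (hF : ∀ k, Measurable (F k))
    (hFY : ∀ k, Integrable (fun ω => F k (Y ω)) P) :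
    ∫ ω, F (N ω) (Y ω) ∂P
      = ∑ k ∈ range (n + 1), binomialWeight n p k * ∫ ω, F k (Y ω) ∂P := by
  have hweight := binomialWeight.nonneg n p hp₀ hp₁
  have hs : ∀ᵐ ω ∂P, N ω ∈ range (n + 1) := by
    refine ae_mem_of_sum_measure_preimage_singleton_eq_one hN ?_
    rw [sum_congr rfl fun k _ => hNdist k, ← ENNReal.ofReal_sum_of_nonneg fun k _ => hweight k,
      binomialWeight.sum_eq_one, ENNReal.ofReal_one]
  rw [integral_comp_eq_sum_measureReal_of_indepFun hN hNY hs (fun k _ => hF k) fun k _ => hFY k]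
  refine sum_congr rfl fun k _ => ?_
  rw [measureReal_def, hNdist k, ENNReal.toReal_ofReal (hweight k)]

end

theorem multifidelity_correction_second_moment_binomial_general
    {Ω : Type*} [MeasurableSpace Ω] {P : Measure Ω} [IsProbabilityMeasure P]
    (a₀ μ : ℝ) (n : ℕ) (hμ : 0 < μ) (hμn : μ ≤ n)
    (W : ℕ → Ω → ℝ)
    (hindep : iIndepFun W P)
    (hident : ∀ i, IdentDistrib (W i) (W 0) P P)
    (hsq : ∀ i, MemLp (W i) 2 P)
    (M : Ω → ℕ) (hM : Measurable M)
    (hMindep : IndepFun M (fun ω i => W i ω) P)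
    (hMdist : ∀ m : ℕ,
      P {ω | M ω = m} = ENNReal.ofReal
        ((n.choose m : ℝ) * (μ / n) ^ m * (1 - μ / n) ^ (n - m))) :
    ∫ ω, (a₀ + μ⁻¹ * ∑ i ∈ Finset.range (M ω), (W i ω - a₀)) ^ 2 ∂P
      = (∫ ω, W 0 ω ∂P) ^ 2 + (∫ ω, (W 0 ω - a₀) ^ 2 ∂P) / μ
        - ((∫ ω, W 0 ω ∂P) - a₀) ^ 2 / n := by
  have hn : (0 : ℝ) < n := hμ.trans_le hμn
  have hX (i : ℕ) : MemLp (fun ω => W i ω - a₀) 2 P := (hsq i).sub (memLp_const a₀)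
  set v := Var[fun ω => W 0 ω - a₀; P]
  set d := ∫ ω, W 0 ω - a₀ ∂P with hd_def
  have hcond (m : ℕ) : ∫ ω, (a₀ + μ⁻¹ * ∑ i ∈ range m, (W i ω - a₀)) ^ 2 ∂P
      = a₀ ^ 2 + (μ⁻¹ ^ 2 * v + 2 * a₀ * μ⁻¹ * d) * m + (μ⁻¹ * d) ^ 2 * m ^ 2 := by
    rw [integral_const_add_mul_sum_range_sq_of_identDistrib hX
      (fun i j hij => (hindep.indepFun hij).comp (measurable_sub_const a₀)
        (measurable_sub_const a₀))
      (fun i => (hident i).comp (measurable_sub_const a₀))]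
    ring
  have hS (m : ℕ) : MemLp (fun ω => a₀ + μ⁻¹ * ∑ i ∈ range m, (W i ω - a₀)) 2 P :=
    (memLp_const a₀).add ((memLp_finsetSum _ fun i _ => hX i).const_mul μ⁻¹)
  rw [integral_comp_eq_sum_binomialWeight_of_indepFun (by positivity) (div_le_one_of_le₀ hμn hn.le)
    hM hMdist hMindep (F := fun m w => (a₀ + μ⁻¹ * ∑ i ∈ range m, (w i - a₀)) ^ 2)
    (fun _ => by fun_prop) fun m => (hS m).integrable_sq]
  simp only [hcond, binomialWeight.sum_mul_quadratic]
  have hv : v = ∫ ω, (W 0 ω - a₀) ^ 2 ∂P - d ^ 2 := variance_eq_sub (hX 0)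
  have hd : ∫ ω, W 0 ω ∂P = d + a₀ := by
    rw [hd_def, integral_sub ((hsq 0).integrable one_le_two) (integrable_const a₀),
      integral_const, probReal_univ, one_smul, sub_add_cancel]
  rw [hv, hd]
  generalize ∫ ω, (W 0 ω - a₀) ^ 2 ∂P = s
  field_simp
  ring

/-- Second moment of the multifidelity correction estimator with a binomial
number of high-fidelity simulations: with `(Wᵢ)` i.i.d. square-integrable and
`M ~ Bin(n, μ/n)` independent of the sequence (so `E[M] = μ`, `0 < μ ≤ n`),
`S = a₀ + μ⁻¹ ∑_{i < M} (Wᵢ - a₀)` satisfies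
`E[S²] = (E[W₀])² + E[(W₀ - a₀)²]/μ - (E[W₀] - a₀)²/n`. -/
theorem multifidelity_correction_second_moment_binomial
    {Ω : Type*} [MeasurableSpace Ω] {P : Measure Ω} [IsProbabilityMeasure P]
    (a₀ μ : ℝ) (n : ℕ) (hn : 0 < n) (hμ : 0 < μ) (hμn : μ ≤ n)
    (W : ℕ → Ω → ℝ) (hWm : ∀ i, Measurable (W i))
    (hindep : iIndepFun W P)
    (hident : ∀ i, IdentDistrib (W i) (W 0) P P)
    (hsq : ∀ i, MemLp (W i) 2 P)
    (M : Ω → ℕ) (hM : Measurable M)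
    (hMindep : IndepFun M (fun ω i => W i ω) P)
    (hMdist : ∀ m : ℕ,
      P {ω | M ω = m} = ENNReal.ofReal
        ((n.choose m : ℝ) * (μ / n) ^ m * (1 - μ / n) ^ (n - m))) :
    ∫ ω, (a₀ + μ⁻¹ * ∑ i ∈ Finset.range (M ω), (W i ω - a₀)) ^ 2 ∂P
      = (∫ ω, W 0 ω ∂P) ^ 2 + (∫ ω, (W 0 ω - a₀) ^ 2 ∂P) / μ
        - ((∫ ω, W 0 ω ∂P) - a₀) ^ 2 / n :=
  multifidelity_correction_second_moment_binomial_general a₀ μ n hμ hμn W hindep hident hsq M hM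
    hMindep hMdist
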